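/- Let G be a graph on n vertices. If d_{⌈n/2⌉}(G)/C(n,⌈n/2⌉) ≥ (n−⌈n/2⌉)/(⌈n/2⌉+1), then the domination polynomial of G is unimodal with mode ⌈n/2⌉. -/

import Mathlib

/-!
Dominating sets form an up-set in the Boolean lattice, so every slice `𝒜 # r` has its upper shadow
inside `𝒜 # (r + 1)`, and the local LYM inequality gives `(n - r) d_r ≤ (r + 1) d_(r+1)`. Below the
middle (`r + 1 ≤ n - r`) this already says `d_r ≤ d_(r+1)`. Above it, the hypothesis reads
`C(n, k+1) ≤ d_k`, and the same inequality propagates `C(n, r+1) ≤ d_r` to every `r ≥ k`; hence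
`d_(r+1) ≤ C(n, r+1) ≤ d_r`.
-/

/-- The number of dominating sets of cardinality `i` in `G`. -/
noncomputable def domCount {V : Type*} (G : SimpleGraph V) (i : ℕ) : ℕ :=
  Nat.card {s : Finset V // s.card = i ∧ ∀ v, v ∈ s ∨ ∃ u ∈ s, G.Adj u v}

open Finset
open scoped FinsetFamily

namespace Finset

variable {α : Type*} [DecidableEq α] [Fintype α] {𝒜 ℬ : Finset (Finset α)} {r : ℕ}

/-- The upward local LYM inequality, obtained from the downward one by taking complements. -/
theorem card_mul_le_card_upShadow_mul (hℬ : (ℬ : Set (Finset α)).Sized r) :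
    #ℬ * (Fintype.card α - r) ≤ #(∂⁺ ℬ) * (r + 1) := by
  rcases le_or_gt r (Fintype.card α) with hr | hr
  · simpa [Nat.sub_sub_self hr] using card_mul_le_card_shadow_mul hℬ.compls
  · simp [Nat.sub_eq_zero_of_le hr.le]

theorem IsUpperSet.upShadow_slice_subset (h𝒜 : IsUpperSet (𝒜 : Set (Finset α))) (r : ℕ) :
    ∂⁺ (𝒜 # r) ⊆ 𝒜 # (r + 1) := by
  intro t ht
  obtain ⟨s, hs, a, ha, rfl⟩ := mem_upShadow_iff.1 ht
  rw [mem_slice] at hs ⊢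
  exact ⟨h𝒜 (subset_insert a s) hs.1, by rw [card_insert_of_notMem ha, hs.2]⟩

theorem IsUpperSet.card_slice_mul_le (h𝒜 : IsUpperSet (𝒜 : Set (Finset α))) (r : ℕ) :
    #(𝒜 # r) * (Fintype.card α - r) ≤ #(𝒜 # (r + 1)) * (r + 1) :=
  (card_mul_le_card_upShadow_mul sized_slice).trans <|
    Nat.mul_le_mul_right _ (card_le_card (h𝒜.upShadow_slice_subset r))

theorem IsUpperSet.card_slice_le_card_slice_succ (h𝒜 : IsUpperSet (𝒜 : Set (Finset α)))
    (hr : 2 * r < Fintype.card α) : #(𝒜 # r) ≤ #(𝒜 # (r + 1)) :=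
  Nat.le_of_mul_le_mul_right
    ((Nat.mul_le_mul_left _ (by omega)).trans (h𝒜.card_slice_mul_le r)) r.succ_pos

theorem IsUpperSet.choose_succ_le_card_slice (h𝒜 : IsUpperSet (𝒜 : Set (Finset α))) {k : ℕ}
    (hk : (Fintype.card α).choose (k + 1) ≤ #(𝒜 # k)) (hkr : k ≤ r) :
    (Fintype.card α).choose (r + 1) ≤ #(𝒜 # r) := by
  induction r, hkr using Nat.le_induction with
  | base => exact hk
  | succ r _ ih =>
    set n := Fintype.card α
    refine Nat.le_of_mul_le_mul_right ?_ (r + 1).succ_pos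
    calc n.choose (r + 1 + 1) * (r + 1 + 1) = n.choose (r + 1) * (n - (r + 1)) :=
          Nat.choose_succ_right_eq n (r + 1)
      _ ≤ #(𝒜 # r) * (n - r) := Nat.mul_le_mul ih (by omega)
      _ ≤ #(𝒜 # (r + 1)) * (r + 1) := h𝒜.card_slice_mul_le r
      _ ≤ #(𝒜 # (r + 1)) * (r + 1 + 1) := Nat.mul_le_mul_left _ (by omega)

theorem IsUpperSet.card_slice_succ_le_card_slice (h𝒜 : IsUpperSet (𝒜 : Set (Finset α))) {k : ℕ}
    (hk : (Fintype.card α).choose (k + 1) ≤ #(𝒜 # k)) (hkr : k ≤ r) :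
    #(𝒜 # (r + 1)) ≤ #(𝒜 # r) :=
  sized_slice.card_le.trans (h𝒜.choose_succ_le_card_slice hk hkr)

end Finset

/-- The ratio `(n - k) / (k + 1)` is `C(n, k+1) / C(n, k)`. -/
theorem Nat.choose_succ_le_of_div_le {𝕜 : Type*} [Field 𝕜] [LinearOrder 𝕜] [IsStrictOrderedRing 𝕜]
    {n k d : ℕ} (hk : k ≤ n) (h : ((n : 𝕜) - k) / (k + 1) ≤ d / n.choose k) :
    n.choose (k + 1) ≤ d := by
  rw [div_le_div_iff₀ (by positivity) (by exact_mod_cast Nat.choose_pos hk)] at h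
  have hsucc : (n.choose (k + 1) : 𝕜) * (k + 1) = (n - k) * n.choose k := by
    rw [mul_comm (_ - _), ← Nat.cast_sub hk]
    exact_mod_cast Nat.choose_succ_right_eq n k
  exact_mod_cast le_of_mul_le_mul_right (hsucc.trans_le h) (by positivity)

namespace SimpleGraph

variable {V : Type*} [Fintype V] (G : SimpleGraph V)

open Classical in
noncomputable def dominatingSets : Finset (Finset V) :=
  {s | ∀ v, v ∈ s ∨ ∃ u ∈ s, G.Adj u v}

theorem isUpperSet_dominatingSets : IsUpperSet (G.dominatingSets : Set (Finset V)) := by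
  intro s t hst hs
  simp only [dominatingSets, coe_filter, mem_univ, true_and, Set.mem_ofPred_eq] at hs ⊢
  intro v
  rcases hs v with hv | ⟨u, hu, huv⟩
  · exact .inl (hst hv)
  · exact .inr ⟨u, hst hu, huv⟩

theorem domCount_eq_card_slice (i : ℕ) : domCount G i = #(G.dominatingSets # i) := by
  rw [domCount, ← Nat.card_eq_finsetCard]
  exact Nat.card_congr <| Equiv.subtypeEquivRight fun s => by
    simp [dominatingSets, mem_slice, and_comm]

end SimpleGraph

/-- If `d_{⌈n/2⌉}(G)/C(n,⌈n/2⌉) ≥ (n-⌈n/2⌉)/(⌈n/2⌉+1)`, then the domination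
polynomial of `G` is unimodal with mode `⌈n/2⌉`.  (Here `⌈n/2⌉ = (n+1)/2` with
natural-number division.) -/
theorem stmt_12 {V : Type*} [Fintype V] (G : SimpleGraph V)
    (h : ((Fintype.card V : ℝ) - (((Fintype.card V + 1) / 2 : ℕ) : ℝ)) /
        ((((Fintype.card V + 1) / 2 : ℕ) : ℝ) + 1) ≤
      (domCount G ((Fintype.card V + 1) / 2) : ℝ) /
        (Fintype.card V).choose ((Fintype.card V + 1) / 2)) :
    (∀ i, i < (Fintype.card V + 1) / 2 → domCount G i ≤ domCount G (i + 1)) ∧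
      (∀ i, (Fintype.card V + 1) / 2 ≤ i → domCount G (i + 1) ≤ domCount G i) := by
  classical
  have hup := G.isUpperSet_dominatingSets
  simp only [G.domCount_eq_card_slice] at h ⊢
  have hmid := Nat.choose_succ_le_of_div_le (by omega) h
  exact ⟨fun i hi => hup.card_slice_le_card_slice_succ (by omega),
    fun i hi => hup.card_slice_succ_le_card_slice hmid hi⟩
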